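/- arXiv:1506.02837 — 4 statements merged into one kernel-verified Lean document; each statement's English description precedes it below -/
import Mathlib

section
/- In the Baumslag–Solitar group BS(1,m) = ⟨a,b | a b a⁻¹ = b^m⟩ with m ≥ 2, the cyclic subgroup ⟨a⟩ generated by the stable letter is malnormal relative to itself: for every g ∈ BS(1,m) with g ∉ ⟨a⟩, the intersection g⟨a⟩g⁻¹ ∩ ⟨a⟩ is trivial. -/
/-!
Every element of BS(1,m) can be written as `a⁻ᵖ bʲ aᵠ`. The exponent sum of `a` is a
homomorphism to `ℤ`, so `g aⁿ g⁻¹ = aᵏ` forces `k = n`: `g` centralizes `aⁿ`. Conjugating by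
powers of `a`, `bʲ` then commutes with `aⁿ`, i.e. `bʲ = b^(j m^|n|)`. Since `b` has infinite
order (in the action on `ℚ` where `a` is `x ↦ m x` and `b` is `x ↦ x + 1`) and
`m^|n| > 1` for `n ≠ 0`, this gives `j = 0`, so `g ∈ ⟨a⟩`.
-/

def BSrel (m : ℕ) : Set (FreeGroup Bool) :=
  {FreeGroup.of true * FreeGroup.of false * (FreeGroup.of true)⁻¹ * (FreeGroup.of false ^ m)⁻¹}

def BS (m : ℕ) : Type := PresentedGroup (BSrel m)

instance (m : ℕ) : Group (BS m) := by unfold BS; infer_instance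

def BSa (m : ℕ) : BS m := PresentedGroup.of true
def BSb (m : ℕ) : BS m := PresentedGroup.of false

namespace BS

variable {m : ℕ}

theorem a_mul_b_mul_a_inv : BSa m * BSb m * (BSa m)⁻¹ = BSb m ^ m := by
  have h : PresentedGroup.mk (BSrel m)
      (FreeGroup.of true * FreeGroup.of false * (FreeGroup.of true)⁻¹ *
        (FreeGroup.of false ^ m)⁻¹) = 1 :=
    (QuotientGroup.eq_one_iff _).2 (Subgroup.subset_normalClosure rfl)
  simp only [map_mul, map_inv, map_pow] at h
  exact mul_inv_eq_one.mp h

theorem a_pow_mul_b_zpow_mul_inv (e : ℕ) (j : ℤ) :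
    BSa m ^ e * BSb m ^ j * (BSa m ^ e)⁻¹ = BSb m ^ (j * m ^ e) := by
  induction e generalizing j with
  | zero => simp
  | succ e ih =>
    calc BSa m ^ (e + 1) * BSb m ^ j * (BSa m ^ (e + 1))⁻¹
        = BSa m ^ e * (BSa m * BSb m * (BSa m)⁻¹) ^ j * (BSa m ^ e)⁻¹ := by
          rw [conj_zpow]; group
      _ = BSb m ^ (j * m ^ (e + 1)) := by
          rw [a_mul_b_mul_a_inv, ← zpow_natCast (BSb m) m, ← zpow_mul, ih, pow_succ]; ring_nf

theorem a_pow_mul_b_zpow (e : ℕ) (j : ℤ) :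
    BSa m ^ e * BSb m ^ j = BSb m ^ (j * m ^ e) * BSa m ^ e := by
  rw [← a_pow_mul_b_zpow_mul_inv, inv_mul_cancel_right]

theorem b_zpow_mul_a_pow_inv (e : ℕ) (j : ℤ) :
    BSb m ^ j * (BSa m ^ e)⁻¹ = (BSa m ^ e)⁻¹ * BSb m ^ (j * m ^ e) := by
  rw [← a_pow_mul_b_zpow_mul_inv]; group

theorem closure_a_b : Subgroup.closure ({BSa m, BSb m} : Set (BS m)) = ⊤ := by
  rw [Set.pair_comm]
  exact Bool.range_eq _ ▸ PresentedGroup.closure_range_of (BSrel m)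

theorem exists_eq_a_pow_inv_mul_b_zpow_mul_a_pow (g : BS m) :
    ∃ p q : ℕ, ∃ j : ℤ, g = (BSa m ^ p)⁻¹ * BSb m ^ j * BSa m ^ q := by
  have hg : g ∈ Subgroup.closure {BSa m, BSb m} := closure_a_b ▸ Subgroup.mem_top g
  induction hg using Subgroup.closure_induction_left with
  | one => exact ⟨0, 0, 0, by simp⟩
  | mul_left x hx y _ ih =>
    obtain ⟨p, q, j, rfl⟩ := ih
    rcases hx with rfl | rfl
    · cases p with
      | zero => exact ⟨0, q + 1, j * m, by
          have := a_pow_mul_b_zpow (m := m) 1 j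
          simp only [pow_one] at this
          simp only [pow_zero, inv_one, one_mul, pow_succ', ← mul_assoc, this]⟩
      | succ p => exact ⟨p, q, j, by rw [pow_succ']; group⟩
    · refine ⟨p, q, m ^ p + j, ?_⟩
      have := b_zpow_mul_a_pow_inv (m := m) p 1
      simp only [zpow_one, one_mul] at this
      rw [show BSb m * ((BSa m ^ p)⁻¹ * BSb m ^ j * BSa m ^ q)
          = BSb m * (BSa m ^ p)⁻¹ * BSb m ^ j * BSa m ^ q by group, this, zpow_add]
      group
  | inv_mul_cancel x hx y _ ih =>
    obtain ⟨p, q, j, rfl⟩ := ih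
    rcases hx with rfl | rfl
    · exact ⟨p + 1, q, j, by rw [pow_succ]; group⟩
    · refine ⟨p, q, -m ^ p + j, ?_⟩
      have := b_zpow_mul_a_pow_inv (m := m) p (-1)
      rw [neg_one_mul] at this
      rw [show (BSb m)⁻¹ * ((BSa m ^ p)⁻¹ * BSb m ^ j * BSa m ^ q)
          = BSb m ^ (-1 : ℤ) * (BSa m ^ p)⁻¹ * BSb m ^ j * BSa m ^ q by group, this, zpow_add]
      group

noncomputable def toPermRat (hm : m ≠ 0) : BS m →* Equiv.Perm ℚ :=
  PresentedGroup.toGroup (f := fun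
      | true => Equiv.mulLeft₀ (m : ℚ) (Nat.cast_ne_zero.2 hm)
      | false => Equiv.addRight 1) <| by
    rintro r rfl
    simp only [map_mul, map_inv, map_pow, FreeGroup.lift_apply_of, mul_inv_eq_one,
      Equiv.nsmul_addRight]
    ext x
    simp [mul_add, mul_inv_cancel_left₀ (Nat.cast_ne_zero.2 hm : (m : ℚ) ≠ 0)]

theorem b_zpow_eq_one (hm : m ≠ 0) {t : ℤ} (h : BSb m ^ t = 1) : t = 0 := by
  have h0 : toPermRat hm (BSb m ^ t) 0 = (0 : ℚ) := by rw [h, map_one]; rfl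
  have hb : toPermRat hm (BSb m) = Equiv.addRight 1 := PresentedGroup.toGroup.of _
  rw [map_zpow, hb, Equiv.zsmul_addRight] at h0
  simpa using h0

noncomputable def exponentSumA (m : ℕ) : BS m →* Multiplicative ℤ :=
  PresentedGroup.toGroup (f := fun x => if x then Multiplicative.ofAdd 1 else 1) <| by
    rintro r rfl
    simp

theorem zpow_eq_of_conj_a_zpow {g : BS m} {n k : ℤ} (h : g * BSa m ^ n * g⁻¹ = BSa m ^ k) :
    n = k := by
  have ha : exponentSumA m (BSa m) = Multiplicative.ofAdd 1 := PresentedGroup.toGroup.of _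
  have h' := congrArg (fun x => Multiplicative.toAdd (exponentSumA m x)) h
  simpa [ha, mul_inv_cancel_comm] using h'

theorem mem_zpowers_of_commute_a_pow (hm : 2 ≤ m) {g : BS m} {n : ℕ} (hn : n ≠ 0)
    (h : Commute g (BSa m ^ n)) : g ∈ Subgroup.zpowers (BSa m) := by
  obtain ⟨p, q, j, rfl⟩ := exists_eq_a_pow_inv_mul_b_zpow_mul_a_pow g
  have hcomm : Commute (BSa m ^ n) (BSb m ^ j) := by
    have hb : BSb m ^ j =
        BSa m ^ p * ((BSa m ^ p)⁻¹ * BSb m ^ j * BSa m ^ q) * (BSa m ^ q)⁻¹ := by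
      group
    rw [hb]
    exact ((Commute.pow_pow_self _ _ _).mul_right h.symm).mul_right
      (Commute.pow_pow_self _ _ _).inv_right
  have hfix : BSb m ^ (j * m ^ n - j) = 1 := by
    rw [zpow_sub, ← a_pow_mul_b_zpow_mul_inv, hcomm.eq, mul_inv_cancel_right, mul_inv_cancel]
  have hmn : (1 : ℤ) < m ^ n := by exact_mod_cast Nat.one_lt_pow hn (by omega)
  have hj : j = 0 := by
    have := b_zpow_eq_one (by omega) hfix
    nlinarith
  subst hj
  simpa using Subgroup.mul_mem _ (Subgroup.inv_mem _ (Subgroup.npow_mem_zpowers _ p))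
    (Subgroup.npow_mem_zpowers _ q)

theorem mem_zpowers_of_commute_a_zpow (hm : 2 ≤ m) {g : BS m} {n : ℤ} (hn : n ≠ 0)
    (h : Commute g (BSa m ^ n)) : g ∈ Subgroup.zpowers (BSa m) := by
  refine mem_zpowers_of_commute_a_pow hm (Int.natAbs_ne_zero.2 hn) ?_
  have := h.zpow_right n.sign
  rwa [← zpow_mul, Int.mul_sign_self, zpow_natCast] at this

end BS

/-- In BS(1,m), m ≥ 2, the cyclic subgroup ⟨a⟩ is malnormal relative to itself:
for g ∉ ⟨a⟩, g⟨a⟩g⁻¹ ∩ ⟨a⟩ = {1}. -/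
theorem stmt_0 (m : ℕ) (hm : 2 ≤ m) (g : BS m) (hg : g ∉ Subgroup.zpowers (BSa m)) :
    (Subgroup.zpowers (BSa m)).map (MulAut.conj g).toMonoidHom ⊓
      Subgroup.zpowers (BSa m) = ⊥ := by
  rw [eq_bot_iff]
  rintro _ ⟨⟨_, ⟨n, rfl⟩, rfl⟩, k, hk⟩
  have hconj : g * BSa m ^ n * g⁻¹ = BSa m ^ k := hk.symm
  obtain rfl := BS.zpow_eq_of_conj_a_zpow hconj
  obtain rfl | hn := eq_or_ne n 0
  · simp
  exact absurd (BS.mem_zpowers_of_commute_a_zpow hm hn (mul_inv_eq_iff_eq_mul.mp hconj)) hg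
end

section
/- Let f be an endomorphism of the Higman group H = ⟨a₀,a₁,a₂,a₃ | aᵢaᵢ₊₁aᵢ⁻¹ = aᵢ₊₁², mod 4⟩ such that f(aᵢ) = aᵢ^{nᵢ} for nonzero integers n₀,n₁,n₂,n₃. Then nᵢ = 1 for all i, i.e., f is the identity. -/
def HigmanRel (m : ZMod 4 → ℕ) : Set (FreeGroup (ZMod 4)) :=
  {r | ∃ i : ZMod 4, r = FreeGroup.of i * FreeGroup.of (i+1) * (FreeGroup.of i)⁻¹ *
      (FreeGroup.of (i+1) ^ (m i))⁻¹}

def HigmanLike (m : ZMod 4 → ℕ) : Type := PresentedGroup (HigmanRel m)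

instance (m : ZMod 4 → ℕ) : Group (HigmanLike m) := by unfold HigmanLike; infer_instance

def higmanGen (m : ZMod 4 → ℕ) (i : ZMod 4) : HigmanLike m := PresentedGroup.of i

def Higman : Type := HigmanLike (fun _ => 2)

instance : Group Higman := by unfold Higman; infer_instance

def higmanA (i : ZMod 4) : Higman := higmanGen (fun _ => 2) i

/-!
Any nonzero exponents `nᵢ` give a relation `aᵢ^{nᵢ} b aᵢ^{-nᵢ} = b²` for `b = aᵢ₊₁^{nᵢ₊₁}`,
while iterating the defining relation gives `aᵢ^k aᵢ₊₁^q aᵢ^{-k} = aᵢ₊₁^{2^k q}` for `k ≥ 0`.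
Comparing the two forces `2^{nᵢ} = 2` (and rules out `nᵢ < 0`), provided every generator has
infinite order. That is the nontrivial input, and it is proved by Higman's model: with
`B = ℚ ⋊ ℤ = BS(1, 2)`, the amalgam `B *_ℤ B` contains three generators `a₀, a₁, a₂` satisfying
the first two relations, in which `a₀` and `a₂` freely generate a free subgroup (reduced words
of an amalgam are nontrivial). Amalgamating two copies of it along this free subgroup, with
`a₀` and `a₂` swapped, gives a group containing images of `a₀, …, a₃` of infinite order
satisfying all four relations.
-/

open Function Monoid

theorem map_mul_mul_inv_eq_sq {G M F : Type*} [Group G] [Group M] [FunLike F G M]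
    [MonoidHomClass F G M] (f : F) {x y : G} (h : x * y * x⁻¹ = y ^ 2) :
    f x * f y * (f x)⁻¹ = f y ^ 2 := by
  rw [← map_inv, ← map_mul, ← map_mul, h, map_pow]

theorem conj_pow_zpow_of_conj_eq_sq {G : Type*} [Group G] {x y : G} (h : x * y * x⁻¹ = y ^ 2)
    (k : ℕ) (q : ℤ) : x ^ k * y ^ q * (x ^ k)⁻¹ = y ^ (2 ^ k * q) := by
  have hk : MulAut.conj (x ^ k) y = y ^ 2 ^ k := by
    induction k with
    | zero => simp
    | succ k ih =>
      rw [pow_succ, map_mul, MulAut.mul_apply, MulAut.conj_apply x, h, map_pow, ih, ← pow_mul,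
        pow_succ]
  rw [← MulAut.conj_apply, map_zpow, hk, ← zpow_natCast, ← zpow_mul, Nat.cast_pow, Nat.cast_ofNat]

theorem eq_one_of_conj_zpow_eq {G : Type*} [Group G] {x y : G} (hy : ¬ IsOfFinOrder y)
    (h : x * y * x⁻¹ = y ^ 2) {n m : ℤ} (hm : m ≠ 0)
    (hn : x ^ n * y ^ m * (x ^ n)⁻¹ = y ^ (2 * m)) : n = 1 := by
  have hinj := injective_zpow_iff_not_isOfFinOrder.2 hy
  obtain ⟨k, rfl | rfl⟩ := Int.eq_nat_or_neg n
  · rw [zpow_natCast, conj_pow_zpow_of_conj_eq_sq h] at hn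
    have h2 : (2 : ℤ) ^ k = 2 := mul_right_cancel₀ hm (hinj hn)
    exact_mod_cast (Nat.pow_eq_self_iff one_lt_two).1 (by exact_mod_cast h2)
  · have hm' : y ^ m = y ^ (2 ^ k * (2 * m)) := by
      rw [← conj_pow_zpow_of_conj_eq_sq h, ← hn, ← zpow_natCast, ← zpow_neg]
      group
    have : m * (2 ^ k * 2 - 1) = 0 := by linear_combination -(hinj hm')
    have : (2 : ℤ) ^ k * 2 = 1 := by
      linarith [(mul_eq_zero.1 this).resolve_left hm]
    omega

namespace Monoid.PushoutI

variable {ι : Type*} {G : ι → Type*} [∀ i, Group (G i)] {H : Type*} [Group H]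
  {φ : ∀ i, H →* G i}

theorem lift_coprodI_injective_of_notMem_range (hφ : ∀ i, Injective (φ i))
    {K : ι → Type*} [∀ i, Group (K i)] (ψ : ∀ i, K i →* G i)
    (hψ : ∀ i (k : K i), k ≠ 1 → ψ i k ∉ (φ i).range) :
    Injective (CoprodI.lift fun i => (of (φ := φ) i).comp (ψ i)) := by
  classical
  refine (injective_iff_map_eq_one _).2 fun x hx => ?_
  obtain ⟨w, rfl⟩ : ∃ w : CoprodI.Word K, w.prod = x :=
    ⟨_, CoprodI.Word.equiv.symm_apply_apply x⟩
  let w' : CoprodI.Word G :=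
    { toList := w.toList.map fun l => ⟨l.1, ψ l.1 l.2⟩
      ne_one := by
        simp only [List.mem_map]
        rintro _ ⟨l, hl, rfl⟩ h
        exact hψ l.1 l.2 (w.ne_one l hl) ⟨1, (map_one _).trans h.symm⟩
      chain_ne := (List.isChain_map _).2 w.chain_ne }
  have hw' : Reduced φ w' := by
    simp only [Reduced, w', List.mem_map]
    rintro _ ⟨l, hl, rfl⟩
    exact hψ l.1 l.2 (w.ne_one l hl)
  have hprod : ofCoprodI w'.prod =
      CoprodI.lift (fun i => (of (φ := φ) i).comp (ψ i)) w.prod := by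
    simp [w', CoprodI.Word.prod, map_list_prod, List.map_map, Function.comp_def]
  have hempty := hw'.eq_empty_of_mem_range hφ (hprod ▸ hx ▸ one_mem _)
  have : w.toList = [] := List.map_eq_nil_iff.1 (congrArg CoprodI.Word.toList hempty)
  simp [CoprodI.Word.prod, this]

theorem lift_freeGroup_injective_of_zpow_notMem_range (hφ : ∀ i, Injective (φ i))
    (g : ∀ i, G i) (hg : ∀ i (k : ℤ), k ≠ 0 → g i ^ k ∉ (φ i).range) :
    Injective (FreeGroup.lift fun i => of (φ := φ) i (g i)) := by
  have hlift : FreeGroup.lift (fun i => of (φ := φ) i (g i)) =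
      (CoprodI.lift fun i => (of (φ := φ) i).comp (FreeGroup.lift fun _ => g i)).comp
        freeGroupEquivCoprodI.toMonoidHom := by
    ext; simp
  rw [hlift, MonoidHom.coe_comp]
  refine (lift_coprodI_injective_of_notMem_range hφ _ fun i k hk => ?_).comp
    freeGroupEquivCoprodI.injective
  obtain ⟨m, rfl⟩ : ∃ m : ℤ, FreeGroup.of () ^ m = k :=
    ⟨_, FreeGroup.freeGroupUnitEquivInt.symm_apply_apply k⟩
  simpa using hg i m (by rintro rfl; simp at hk)

end Monoid.PushoutI

/-- `⟨q, e⟩` is the affine map `x ↦ 2 ^ e * x + q` of `ℚ`; multiplication is composition. -/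
@[ext]
structure DyadicAffine where
  trans : ℚ
  exp : ℤ

namespace DyadicAffine

instance : Mul DyadicAffine := ⟨fun a b => ⟨a.trans + 2 ^ a.exp * b.trans, a.exp + b.exp⟩⟩
instance : One DyadicAffine := ⟨⟨0, 0⟩⟩
instance : Inv DyadicAffine := ⟨fun a => ⟨-(2 ^ (-a.exp) * a.trans), -a.exp⟩⟩

theorem mul_def (a b : DyadicAffine) :
    a * b = ⟨a.trans + 2 ^ a.exp * b.trans, a.exp + b.exp⟩ :=
  rfl

theorem one_def : (1 : DyadicAffine) = ⟨0, 0⟩ := rfl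

theorem inv_def (a : DyadicAffine) : a⁻¹ = ⟨-(2 ^ (-a.exp) * a.trans), -a.exp⟩ := rfl

instance : Group DyadicAffine :=
  Group.ofLeftAxioms
    (fun a b c => by
      simp only [mul_def, mk.injEq, zpow_add₀ (two_ne_zero (α := ℚ))]
      constructor <;> ring)
    (fun a => by simp [mul_def, one_def])
    (fun a => by
      simp only [inv_def, mul_def, one_def, mk.injEq]
      constructor <;> ring)

def shift : DyadicAffine := ⟨1, 0⟩

def double : DyadicAffine := ⟨0, 1⟩

theorem double_mul_shift_mul_inv : double * shift * double⁻¹ = shift ^ 2 := by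
  simp only [double, shift, mul_def, inv_def, pow_two, mk.injEq]
  norm_num

theorem shift_zpow (k : ℤ) : shift ^ k = ⟨k, 0⟩ := by
  induction k using Int.induction_on with
  | zero => rfl
  | succ k ih => rw [zpow_add_one, ih]; simp [shift, mul_def]
  | pred k ih => rw [zpow_sub_one, ih]; simp [shift, mul_def, inv_def]; ring

theorem double_zpow (k : ℤ) : double ^ k = ⟨0, k⟩ := by
  induction k using Int.induction_on with
  | zero => rfl
  | succ k ih => rw [zpow_add_one, ih]; simp [double, mul_def]
  | pred k ih => rw [zpow_sub_one, ih]; simp [double, mul_def, inv_def]; ring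

theorem injective_zpow_shift : Injective (shift ^ · : ℤ → DyadicAffine) := fun _ _ h => by
  simpa [shift_zpow] using h

theorem injective_zpow_double : Injective (double ^ · : ℤ → DyadicAffine) := fun _ _ h => by
  simpa [double_zpow] using h

theorem zpow_shift_notMem_zpowers_double {k : ℤ} (hk : k ≠ 0) :
    shift ^ k ∉ Subgroup.zpowers double := by
  simpa [Subgroup.mem_zpowers_iff, shift_zpow, double_zpow, eq_comm] using hk

theorem zpow_double_notMem_zpowers_shift {k : ℤ} (hk : k ≠ 0) :
    double ^ k ∉ Subgroup.zpowers shift := by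
  simpa [Subgroup.mem_zpowers_iff, shift_zpow, double_zpow, eq_comm] using hk

end DyadicAffine

namespace HigmanModel

open DyadicAffine PushoutI

abbrev halfBase : ∀ _ : Bool, Multiplicative ℤ →* DyadicAffine :=
  fun i => bif i then zpowersHom _ double else zpowersHom _ shift

theorem halfBase_injective (i : Bool) : Injective (halfBase i) := by
  cases i
  · exact injective_zpow_shift.comp Multiplicative.toAdd.injective
  · exact injective_zpow_double.comp Multiplicative.toAdd.injective

/-- `BS(1,2) *_ℤ BS(1,2)`, the `shift` of the first factor identified with the `double` of the
second: generated by `a₀, a₁, a₂` with `aᵢ aᵢ₊₁ aᵢ⁻¹ = aᵢ₊₁²` for `i = 0, 1`. -/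
abbrev Half : Type := PushoutI halfBase

def Half.a0 : Half := of false double

def Half.a1 : Half := of false shift

def Half.a2 : Half := of true shift

theorem Half.a1_eq : a1 = of true double := by
  simpa [a1] using (of_apply_eq_base halfBase false (.ofAdd 1)).trans
    (of_apply_eq_base halfBase true (.ofAdd 1)).symm

theorem Half.a0_conj : a0 * a1 * a0⁻¹ = a1 ^ 2 :=
  map_mul_mul_inv_eq_sq _ double_mul_shift_mul_inv

theorem Half.a1_conj : a1 * a2 * a1⁻¹ = a2 ^ 2 :=
  a1_eq ▸ map_mul_mul_inv_eq_sq _ double_mul_shift_mul_inv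

theorem Half.not_isOfFinOrder_of_shift (i : Bool) :
    ¬ IsOfFinOrder (of (φ := halfBase) i shift) := by
  rw [(of_injective halfBase_injective i).isOfFinOrder_iff]
  exact injective_zpow_iff_not_isOfFinOrder.1 injective_zpow_shift

theorem Half.not_isOfFinOrder_a0 : ¬ IsOfFinOrder a0 := by
  rw [a0, (of_injective halfBase_injective false).isOfFinOrder_iff]
  exact injective_zpow_iff_not_isOfFinOrder.1 injective_zpow_double

def freeToHalf : FreeGroup Bool →* Half :=
  FreeGroup.lift fun i => of i (bif i then shift else double)

theorem freeToHalf_injective : Injective freeToHalf :=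
  lift_freeGroup_injective_of_zpow_notMem_range halfBase_injective _ fun i _ hk => by
    cases i
    · exact zpow_double_notMem_zpowers_shift hk
    · exact zpow_shift_notMem_zpowers_double hk

/-- Amalgamating two copies of `Half` along `⟨a₀, a₂⟩ ≅ F₂`, identifying `a₀` of the first copy
with `a₂` of the second and vice versa. -/
abbrev modelBase : ∀ _ : Bool, FreeGroup Bool →* Half :=
  fun i => bif i then freeToHalf.comp (FreeGroup.freeGroupCongr Equiv.boolNot).toMonoidHom
    else freeToHalf

theorem modelBase_injective (i : Bool) : Injective (modelBase i) := by
  cases i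
  · exact freeToHalf_injective
  · exact freeToHalf_injective.comp (MulEquiv.injective _)

abbrev Model : Type := PushoutI modelBase

theorem of_false_a0 : (of false Half.a0 : Model) = of true Half.a2 := by
  simpa [freeToHalf, Half.a0, Half.a2, Equiv.boolNot] using
    (of_apply_eq_base modelBase false (.of false)).trans
      (of_apply_eq_base modelBase true (.of false)).symm

theorem of_false_a2 : (of false Half.a2 : Model) = of true Half.a0 := by
  simpa [freeToHalf, Half.a0, Half.a2, Equiv.boolNot] using
    (of_apply_eq_base modelBase false (.of true)).trans
      (of_apply_eq_base modelBase true (.of true)).symm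

def gen : ZMod 4 → Model :=
  ![of false Half.a0, of false Half.a1, of false Half.a2, of true Half.a1]

theorem gen_conj (i : ZMod 4) : gen i * gen (i + 1) * (gen i)⁻¹ = gen (i + 1) ^ 2 := by
  obtain rfl | rfl | rfl | rfl : i = 0 ∨ i = 1 ∨ i = 2 ∨ i = 3 := by revert i; decide
  · exact map_mul_mul_inv_eq_sq (of (φ := modelBase) false) Half.a0_conj
  · exact map_mul_mul_inv_eq_sq (of (φ := modelBase) false) Half.a1_conj
  · have := map_mul_mul_inv_eq_sq (of (φ := modelBase) true) Half.a0_conj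
    rwa [← of_false_a2] at this
  · have := map_mul_mul_inv_eq_sq (of (φ := modelBase) true) Half.a1_conj
    rwa [← of_false_a0] at this

theorem not_isOfFinOrder_gen (i : ZMod 4) : ¬ IsOfFinOrder (gen i) := by
  obtain rfl | rfl | rfl | rfl : i = 0 ∨ i = 1 ∨ i = 2 ∨ i = 3 := by revert i; decide
  · exact (of_injective modelBase_injective false).isOfFinOrder_iff.not.2 Half.not_isOfFinOrder_a0
  · exact (of_injective modelBase_injective false).isOfFinOrder_iff.not.2
      (Half.not_isOfFinOrder_of_shift false)
  · exact (of_injective modelBase_injective false).isOfFinOrder_iff.not.2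
      (Half.not_isOfFinOrder_of_shift true)
  · exact (of_injective modelBase_injective true).isOfFinOrder_iff.not.2
      (Half.not_isOfFinOrder_of_shift false)

end HigmanModel

theorem higmanA_conj (i : ZMod 4) :
    higmanA i * higmanA (i + 1) * (higmanA i)⁻¹ = higmanA (i + 1) ^ 2 := by
  have := PresentedGroup.one_of_mem (rels := HigmanRel fun _ => 2) ⟨i, rfl⟩
  simp only [map_mul, map_inv, map_pow, mul_inv_eq_one] at this
  exact this

def higmanToModel : Higman →* HigmanModel.Model :=
  PresentedGroup.toGroup (f := HigmanModel.gen) <| by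
    rintro _ ⟨i, rfl⟩
    simp [HigmanModel.gen_conj]

theorem higmanToModel_higmanA (i : ZMod 4) : higmanToModel (higmanA i) = HigmanModel.gen i :=
  PresentedGroup.toGroup.of _

theorem not_isOfFinOrder_higmanA (i : ZMod 4) : ¬ IsOfFinOrder (higmanA i) := fun h =>
  HigmanModel.not_isOfFinOrder_gen i (higmanToModel_higmanA i ▸ higmanToModel.isOfFinOrder h)

/-- If an endomorphism of the Higman group maps each generator aᵢ to aᵢ^{nᵢ} with nᵢ ≠ 0,
then every nᵢ = 1 and f is the identity. -/
theorem stmt_10 (f : Higman →* Higman) (n : ZMod 4 → ℤ) (hn : ∀ i, n i ≠ 0)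
    (hf : ∀ i : ZMod 4, f (higmanA i) = higmanA i ^ (n i)) :
    (∀ i : ZMod 4, n i = 1) ∧ f = MonoidHom.id Higman := by
  have hn1 (i : ZMod 4) : n i = 1 := by
    refine eq_one_of_conj_zpow_eq (not_isOfFinOrder_higmanA (i + 1)) (higmanA_conj i)
      (hn (i + 1)) ?_
    have := map_mul_mul_inv_eq_sq f (higmanA_conj i)
    rwa [hf, hf, ← zpow_natCast, ← zpow_mul, mul_comm] at this
  refine ⟨hn1, PresentedGroup.ext fun i => ?_⟩
  change f (higmanA i) = higmanA i
  rw [hf, hn1, zpow_one]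
end

section
/- Let G be a finite group and x₀,x₁,x₂,x₃ ∈ G satisfy xᵢ xᵢ₊₁ xᵢ⁻¹ = xᵢ₊₁² for all i mod 4. Then x₀ = x₁ = x₂ = x₃ = 1. (Higman's theorem: the Higman group has no nontrivial finite quotients.) -/
/-!
Conjugating `x (i+1)` by `x i ^ orderOf (x i)` gives `orderOf (x (i+1)) ∣ 2 ^ orderOf (x i) - 1`.
If `p` is the least prime dividing one of the orders, say `p ∣ orderOf (x (i+1))`, then the order
of `2` modulo `p` divides both `orderOf (x i)` and `p - 1`; every prime factor of `orderOf (x i)`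
is at least `p`, so `2 ≡ 1 [MOD p]`, which is absurd.
-/

theorem conj_pow_eq_pow_pow_of_conj_eq_pow {G : Type*} [Group G] {a b : G} {m : ℕ}
    (h : a * b * a⁻¹ = b ^ m) (k : ℕ) : a ^ k * b * (a ^ k)⁻¹ = b ^ m ^ k := by
  induction k with
  | zero => simp
  | succ k ih =>
    calc a ^ (k + 1) * b * (a ^ (k + 1))⁻¹ = a * (a ^ k * b * (a ^ k)⁻¹) * a⁻¹ := by group
      _ = (a * b * a⁻¹) ^ m ^ k := by rw [ih, conj_pow]
      _ = b ^ m ^ (k + 1) := by rw [h, ← pow_mul, pow_succ']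

theorem orderOf_dvd_pow_orderOf_sub_one_of_conj_eq_pow {G : Type*} [Group G] {a b : G} {m : ℕ}
    (hm : m ≠ 0) (h : a * b * a⁻¹ = b ^ m) : orderOf b ∣ m ^ orderOf a - 1 := by
  have hfix : b ^ m ^ orderOf a = b ^ 1 := by
    rw [← conj_pow_eq_pow_pow_of_conj_eq_pow h, pow_orderOf_eq_one]
    simp
  exact (Nat.modEq_iff_dvd' (Nat.one_le_pow _ _ (Nat.pos_of_ne_zero hm))).mp
    (pow_eq_pow_iff_modEq.mp hfix).symm

theorem Nat.minFac_lt_of_prime_dvd_two_pow_sub_one {p m : ℕ} (hp : p.Prime) (hm : m ≠ 0)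
    (h : p ∣ 2 ^ m - 1) : m.minFac < p := by
  have := Fact.mk hp
  have h2m : (2 : ZMod p) ^ m = 1 := by
    have := (ZMod.natCast_eq_natCast_iff _ _ p).mpr ((Nat.modEq_iff_dvd' Nat.one_le_two_pow).mpr h)
    push_cast at this
    exact this.symm
  have h2 : (2 : ZMod p) ≠ 0 := by
    rintro h0
    simp [h0, zero_pow hm] at h2m
  have hd : orderOf (2 : ZMod p) ≠ 1 := by
    rw [Ne, orderOf_eq_one_iff]
    intro h21
    have : (1 : ZMod p) + 1 = 1 := by rw [one_add_one_eq_two, h21]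
    simp at this
  have hdm : orderOf (2 : ZMod p) ∣ m := orderOf_dvd_of_pow_eq_one h2m
  have hdp : orderOf (2 : ZMod p) ∣ p - 1 := ZMod.orderOf_dvd_card_sub_one h2
  calc m.minFac ≤ (orderOf (2 : ZMod p)).minFac :=
        Nat.minFac_le_of_dvd (Nat.minFac_prime hd).two_le ((Nat.minFac_dvd _).trans hdm)
    _ ≤ orderOf (2 : ZMod p) := Nat.minFac_le (Nat.pos_of_dvd_of_pos hdm (Nat.pos_of_ne_zero hm))
    _ < p := Nat.lt_of_le_pred hp.pos (Nat.le_of_dvd (Nat.sub_pos_of_lt hp.one_lt) hdp)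

theorem eq_one_of_dvd_two_pow_sub_one_of_surjective {ι : Type*} [Fintype ι] {f : ι → ι}
    (hf : Function.Surjective f) {n : ι → ℕ} (hn : ∀ i, n i ≠ 0)
    (hdvd : ∀ i, n (f i) ∣ 2 ^ n i - 1) (i : ι) : n i = 1 := by
  by_contra hi
  have hN : ∏ j, n j ≠ 1 := fun h =>
    hi (Nat.dvd_one.mp (h ▸ Finset.dvd_prod_of_mem n (Finset.mem_univ i)))
  have hp := Nat.minFac_prime hN
  obtain ⟨j, -, hpj⟩ := hp.prime.exists_mem_finset_dvd (Nat.minFac_dvd (∏ j, n j))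
  obtain ⟨k, rfl⟩ := hf j
  have hpk := hpj.trans (hdvd k)
  have hk : n k ≠ 1 := fun h => hp.one_lt.ne' (Nat.dvd_one.mp (by simpa [h] using hpk))
  have hmin : (∏ j, n j).minFac ≤ (n k).minFac :=
    Nat.minFac_le_of_dvd (Nat.minFac_prime hk).two_le
      ((Nat.minFac_dvd _).trans (Finset.dvd_prod_of_mem n (Finset.mem_univ k)))
  exact (Nat.minFac_lt_of_prime_dvd_two_pow_sub_one hp (hn k) hpk).not_ge hmin

/-- Higman: in a finite group, elements x₀,x₁,x₂,x₃ with xᵢ xᵢ₊₁ xᵢ⁻¹ = xᵢ₊₁² (mod 4)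
are all trivial. -/
theorem stmt_15 (G : Type) [Group G] [Finite G] (x : ZMod 4 → G)
    (hx : ∀ i : ZMod 4, x i * x (i + 1) * (x i)⁻¹ = (x (i + 1)) ^ 2) :
    ∀ i : ZMod 4, x i = 1 := by
  have horder : ∀ i, orderOf (x i) = 1 :=
    eq_one_of_dvd_two_pow_sub_one_of_surjective (add_right_surjective 1)
      (fun i => (orderOf_pos (x i)).ne')
      (fun i => orderOf_dvd_pow_orderOf_sub_one_of_conj_eq_pow two_ne_zero (hx i))
  exact fun i => orderOf_eq_one_iff.mp (horder i)
end

section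
/- In BS(1,m) = ⟨a,b | aba⁻¹ = b^m⟩ with m ≥ 2, for any k ≥ 1, the centralizer of b^k in BS(1,m) equals the normal closure of b, i.e. the subgroup consisting of elements that can be written as a^{-r} b^{s} a^{r} for some r ≥ 0 and integer s (the subgroup isomorphic to ℤ[1/m]). -/
namespace BSaux

lemma bs_rel (m : ℕ) : BSa m * BSb m * (BSa m)⁻¹ = (BSb m) ^ m := by
  have h1 : (PresentedGroup.mk (BSrel m))
      (FreeGroup.of true * FreeGroup.of false * (FreeGroup.of true)⁻¹ *
        (FreeGroup.of false ^ m)⁻¹) = 1 := by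
    apply (QuotientGroup.eq_one_iff _).mpr
    exact Subgroup.subset_normalClosure rfl
  rw [map_mul, map_mul, map_mul, map_inv, map_inv, map_pow] at h1
  exact mul_inv_eq_one.mp h1

lemma conj_zpow_rel (m : ℕ) (s : ℤ) :
    BSa m * BSb m ^ s * (BSa m)⁻¹ = BSb m ^ ((m : ℤ) * s) := by
  have h : BSa m * BSb m ^ s * (BSa m)⁻¹ = (BSa m * BSb m * (BSa m)⁻¹) ^ s := by
    rw [conj_zpow]
  rw [h, bs_rel m, ← zpow_natCast, ← zpow_mul]

/-- the element a^{-r} b^s a^r -/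
def elt (m : ℕ) (r : ℕ) (s : ℤ) : BS m := (BSa m ^ r)⁻¹ * BSb m ^ s * BSa m ^ r

lemma elt_succ (m : ℕ) (r : ℕ) (s : ℤ) : elt m (r + 1) ((m : ℤ) * s) = elt m r s := by
  unfold elt
  have h : BSb m ^ ((m : ℤ) * s) = BSa m * BSb m ^ s * (BSa m)⁻¹ := (conj_zpow_rel m s).symm
  rw [h, pow_succ' (BSa m) r]
  group

lemma elt_le (m : ℕ) {r R : ℕ} (h : r ≤ R) (s : ℤ) :
    elt m r s = elt m R ((m : ℤ) ^ (R - r) * s) := by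
  induction R, h using Nat.le_induction with
  | base => simp
  | succ R hR ih =>
      rw [ih, ← elt_succ m R ((m : ℤ) ^ (R - r) * s)]
      congr 1
      rw [← mul_assoc, ← pow_succ']
      congr 2
      omega

lemma elt_mul (m : ℕ) (r : ℕ) (s t : ℤ) : elt m r s * elt m r t = elt m r (s + t) := by
  unfold elt
  rw [zpow_add]
  group

lemma elt_inv (m : ℕ) (r : ℕ) (s : ℤ) : (elt m r s)⁻¹ = elt m r (-s) := by
  unfold elt
  rw [zpow_neg]
  group

/-- The subgroup of elements of the form a^{-r} b^s a^r. -/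
def Hsub (m : ℕ) : Subgroup (BS m) where
  carrier := {g | ∃ r : ℕ, ∃ s : ℤ, g = elt m r s}
  one_mem' := ⟨0, 0, by simp [elt]⟩
  mul_mem' := by
    rintro x y ⟨r₁, s₁, rfl⟩ ⟨r₂, s₂, rfl⟩
    refine ⟨max r₁ r₂, (m : ℤ) ^ (max r₁ r₂ - r₁) * s₁ + (m : ℤ) ^ (max r₁ r₂ - r₂) * s₂, ?_⟩
    rw [elt_le m (le_max_left r₁ r₂) s₁, elt_le m (le_max_right r₁ r₂) s₂, elt_mul]
  inv_mem' := by
    rintro x ⟨r, s, rfl⟩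
    exact ⟨r, -s, elt_inv m r s⟩

lemma BSb_mem (m : ℕ) : BSb m ∈ Hsub m := ⟨0, 1, by simp [elt]⟩

lemma BSb_pow_eq (m k : ℕ) : BSb m ^ k = elt m 0 (k : ℤ) := by simp [elt, zpow_natCast]

lemma H_le_centralizer (m k : ℕ) : Hsub m ≤ Subgroup.centralizer {BSb m ^ k} := by
  rintro g ⟨r, s, rfl⟩
  rw [Subgroup.mem_centralizer_iff]
  rintro h (rfl : h = BSb m ^ k)
  rw [BSb_pow_eq m k, elt_le m (Nat.zero_le r) (k : ℤ), elt_mul, elt_mul, add_comm]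

/-- Conjugation by a⁻¹ raises r by one. -/
lemma conj_ainv (m : ℕ) (r : ℕ) (s : ℤ) :
    (BSa m)⁻¹ * elt m r s * BSa m = elt m (r + 1) s := by
  unfold elt
  rw [pow_succ' (BSa m) r]
  group

lemma conj_a (m : ℕ) (r : ℕ) (s : ℤ) :
    BSa m * elt m r s * (BSa m)⁻¹ ∈ Hsub m := by
  cases r with
  | zero =>
      refine ⟨0, (m : ℤ) * s, ?_⟩
      have h := (conj_zpow_rel m s).symm
      simp only [elt, pow_zero, inv_one, one_mul, mul_one]
      exact h.symm
  | succ r' =>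
      refine ⟨r', s, ?_⟩
      unfold elt
      rw [pow_succ' (BSa m) r']
      group

/-- The set of elements normalizing Hsub, as a subgroup. -/
def Ksub (m : ℕ) : Subgroup (BS m) where
  carrier := {g | ∀ h ∈ Hsub m, g * h * g⁻¹ ∈ Hsub m ∧ g⁻¹ * h * g ∈ Hsub m}
  one_mem' := by
    intro h hh
    constructor <;> simpa using hh
  mul_mem' := by
    rintro x y hx hy h hh
    constructor
    · have h1 := (hy h hh).1
      have h2 := (hx _ h1).1
      have e : x * y * h * (x * y)⁻¹ = x * (y * h * y⁻¹) * x⁻¹ := by group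
      rw [e]; exact h2
    · have h1 := (hx h hh).2
      have h2 := (hy _ h1).2
      have e : (x * y)⁻¹ * h * (x * y) = y⁻¹ * (x⁻¹ * h * x) * y := by group
      rw [e]; exact h2
  inv_mem' := by
    rintro x hx h hh
    simp only [inv_inv]
    exact ⟨(hx h hh).2, (hx h hh).1⟩

lemma mem_Ksub (m : ℕ) (g : BS m) : g ∈ Ksub m := by
  refine PresentedGroup.generated_by (BSrel m) (Ksub m) ?_ g
  intro j
  cases j with
  | false =>
      rintro h hh
      constructor
      · exact (Hsub m).mul_mem ((Hsub m).mul_mem (BSb_mem m) hh) ((Hsub m).inv_mem (BSb_mem m))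
      · exact (Hsub m).mul_mem ((Hsub m).mul_mem ((Hsub m).inv_mem (BSb_mem m)) hh) (BSb_mem m)
  | true =>
      rintro h ⟨r, s, rfl⟩
      exact ⟨conj_a m r s, ⟨r + 1, s, conj_ainv m r s⟩⟩

instance Hsub_normal (m : ℕ) : (Hsub m).Normal :=
  ⟨fun h hh g => (mem_Ksub m g h hh).1⟩

lemma normalClosure_le_H (m : ℕ) : Subgroup.normalClosure {BSb m} ≤ Hsub m := by
  apply Subgroup.normalClosure_le_normal
  rintro x (rfl : x = BSb m)
  exact BSb_mem m

/-! ### The homomorphism to ℤ -/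

def phi (m : ℕ) : BS m →* Multiplicative ℤ :=
  PresentedGroup.toGroup (f := fun x => if x then Multiplicative.ofAdd 1 else 1)
    (by
      rintro r (rfl : r = _)
      simp [map_mul, map_inv, map_pow])

@[simp] lemma phi_a (m : ℕ) : phi m (BSa m) = Multiplicative.ofAdd 1 := by
  exact (PresentedGroup.toGroup.of (x := true) _).trans (by simp)

@[simp] lemma phi_b (m : ℕ) : phi m (BSb m) = 1 := by
  exact (PresentedGroup.toGroup.of (x := false) _).trans (by simp)

lemma ker_phi_le (m : ℕ) : (phi m).ker ≤ Subgroup.normalClosure {BSb m} := by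
  intro g hg
  set N := Subgroup.normalClosure {BSb m} with hN
  let π := QuotientGroup.mk' N
  let ψ : Multiplicative ℤ →* BS m ⧸ N := zpowersHom _ (π (BSa m))
  have hb : π (BSb m) = 1 := by
    apply (QuotientGroup.eq_one_iff _).mpr
    exact Subgroup.subset_normalClosure rfl
  have hcomp : ψ.comp (phi m) = π := by
    apply PresentedGroup.ext
    rintro (_ | _)
    · show ψ ((phi m) (BSb m)) = π (BSb m)
      rw [phi_b, map_one, hb]
    · show ψ ((phi m) (BSa m)) = π (BSa m)
      rw [phi_a]
      simp [ψ]
  have hπ : π g = 1 := by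
    rw [← hcomp]
    have : phi m g = 1 := MonoidHom.mem_ker.mp hg
    simp [this]
  exact (QuotientGroup.eq_one_iff _).mp hπ

/-! ### The affine representation -/

@[ext] structure Aff where
  a : ℚˣ
  b : ℚ

instance : Mul Aff := ⟨fun g h => ⟨g.a * h.a, (g.a : ℚ) * h.b + g.b⟩⟩
instance : One Aff := ⟨⟨1, 0⟩⟩
instance : Inv Aff := ⟨fun g => ⟨g.a⁻¹, -((g.a⁻¹ : ℚ) * g.b)⟩⟩

@[simp] lemma Aff.mul_a (g h : Aff) : (g * h).a = g.a * h.a := rfl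
@[simp] lemma Aff.mul_b (g h : Aff) : (g * h).b = (g.a : ℚ) * h.b + g.b := rfl
@[simp] lemma Aff.one_a : (1 : Aff).a = 1 := rfl
@[simp] lemma Aff.one_b : (1 : Aff).b = 0 := rfl
@[simp] lemma Aff.inv_a (g : Aff) : (g⁻¹).a = g.a⁻¹ := rfl
@[simp] lemma Aff.inv_b (g : Aff) : (g⁻¹).b = -((g.a⁻¹ : ℚ) * g.b) := rfl

instance : Group Aff where
  mul_assoc g h k := by
    ext
    · simp [mul_assoc]
    · simp only [Aff.mul_a, Aff.mul_b, Units.val_mul]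
      ring
  one_mul g := by ext <;> simp
  mul_one g := by ext <;> simp
  inv_mul_cancel g := by ext <;> simp

lemma Aff.B_pow (j : ℕ) : (⟨1, 1⟩ : Aff) ^ j = ⟨1, (j : ℚ)⟩ := by
  induction j with
  | zero =>
      ext
      · simp [pow_zero]
      · simp [pow_zero]
  | succ n ih =>
      rw [pow_succ, ih]
      ext
      · simp
      · simp only [Aff.mul_b, Units.val_one, one_mul]
        push_cast
        ring

def AffF (m : ℕ) (hm : 2 ≤ m) : Bool → Aff := fun x =>
  if x then ⟨Units.mk0 (m : ℚ) (Nat.cast_ne_zero.mpr (by omega)), 0⟩ else ⟨1, 1⟩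

lemma Phi_rel (m : ℕ) (hm : 2 ≤ m) :
    ∀ r ∈ BSrel m, FreeGroup.lift (AffF m hm) r = 1 := by
  rintro r (rfl : r = _)
  rw [map_mul, map_mul, map_mul, map_inv, map_inv, map_pow]
  simp only [FreeGroup.lift_apply_of, AffF, if_true, if_false, Bool.false_eq_true]
  rw [mul_inv_eq_one, Aff.B_pow]
  ext
  · simp
  · simp

def Phi (m : ℕ) (hm : 2 ≤ m) : BS m →* Aff :=
  PresentedGroup.toGroup (Phi_rel m hm)

lemma Phi_a (m : ℕ) (hm : 2 ≤ m) :
    Phi m hm (BSa m) = ⟨Units.mk0 (m : ℚ) (Nat.cast_ne_zero.mpr (by omega)), 0⟩ := by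
  exact (PresentedGroup.toGroup.of (f := AffF m hm) (Phi_rel m hm) (x := true)).trans
    (by simp [AffF])

lemma Phi_b (m : ℕ) (hm : 2 ≤ m) : Phi m hm (BSb m) = ⟨1, 1⟩ := by
  exact (PresentedGroup.toGroup.of (f := AffF m hm) (Phi_rel m hm) (x := false)).trans
    (by simp [AffF])

def fstHom : Aff →* ℚˣ where
  toFun := Aff.a
  map_one' := rfl
  map_mul' _ _ := rfl

lemma fst_Phi (m : ℕ) (hm : 2 ≤ m) (g : BS m) :
    (Phi m hm g).a = Units.mk0 (m : ℚ) (Nat.cast_ne_zero.mpr (by omega)) ^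
      Multiplicative.toAdd (phi m g) := by
  have hcomp : fstHom.comp (Phi m hm) =
      (zpowersHom ℚˣ (Units.mk0 (m : ℚ) (Nat.cast_ne_zero.mpr (by omega)))).comp (phi m) := by
    apply PresentedGroup.ext
    rintro (_ | _)
    · show fstHom (Phi m hm (BSb m)) =
        zpowersHom ℚˣ (Units.mk0 (m : ℚ) _) (phi m (BSb m))
      rw [Phi_b, phi_b]
      simp [fstHom]
    · show fstHom (Phi m hm (BSa m)) =
        zpowersHom ℚˣ (Units.mk0 (m : ℚ) _) (phi m (BSa m))
      rw [Phi_a, phi_a]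
      simp [fstHom]
  have := congrArg (fun f => f g) hcomp
  simpa [fstHom] using this

lemma centralizer_le_ker (m : ℕ) (hm : 2 ≤ m) (k : ℕ) (hk : 1 ≤ k) :
    Subgroup.centralizer {BSb m ^ k} ≤ (phi m).ker := by
  intro g hg
  have hcomm : BSb m ^ k * g = g * BSb m ^ k :=
    (Subgroup.mem_centralizer_iff.mp hg) (BSb m ^ k) rfl
  have hPhi := congrArg (Phi m hm) hcomm
  simp only [map_mul, map_pow] at hPhi
  rw [Phi_b, Aff.B_pow] at hPhi
  have hb := congrArg Aff.b hPhi
  simp only [Aff.mul_b, Units.val_one, one_mul] at hb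
  -- hb : (Phi g).b + k = ↑(Phi g).a * k + (Phi g).b
  have hk0 : (k : ℚ) ≠ 0 := Nat.cast_ne_zero.mpr (by omega)
  have ha : ((Phi m hm g).a : ℚ) = 1 := by
    have : ((Phi m hm g).a : ℚ) * k = 1 * k := by linarith
    field_simp at this
    rw [this]
  have hz : ((m : ℚ)) ^ (Multiplicative.toAdd (phi m g)) = 1 := by
    have := fst_Phi m hm g
    have hval := congrArg (Units.val) this
    rw [ha] at hval
    simpa using hval.symm
  have hm1 : (m : ℚ) ≠ 1 := by
    intro h
    have : (m : ℚ) = ((1 : ℕ) : ℚ) := by simpa using h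
    have := Nat.cast_injective this
    omega
  have h0 : (0 : ℚ) ≤ (m : ℚ) := by positivity
  have htoadd := (zpow_eq_one_iff_right₀ h0 hm1).mp hz
  rw [MonoidHom.mem_ker]
  have hfin : phi m g = Multiplicative.ofAdd 0 := by
    rw [← htoadd]
    rfl
  simpa using hfin

end BSaux

/-- In BS(1,m), m ≥ 2, for k ≥ 1, the centralizer of b^k equals the normal closure of b. -/
theorem stmt_16 (m : ℕ) (hm : 2 ≤ m) (k : ℕ) (hk : 1 ≤ k) :
    Subgroup.centralizer {BSb m ^ k} = Subgroup.normalClosure {BSb m} := by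
  apply le_antisymm
  · exact fun g hg => BSaux.ker_phi_le m (BSaux.centralizer_le_ker m hm k hk hg)
  · exact le_trans (BSaux.normalClosure_le_H m) (BSaux.H_le_centralizer m k)
end
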